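/- Let A be a ring, I an ideal, M an A-module, and J = (x₁,...,x_s) ⊆ I a reduction of I with respect to M with reduction number r. Suppose there exists k ≥ 1 such that for all n ≥ r + k and all i = 1,...,s, [(x₁,...,x_{i-1})IⁿM : x_i] ∩ IⁿM = (x₁,...,x_{i-1})I^{n-1}M. Then the relation type of J with respect to I^r M satisfies rt(J; I^r M) ≤ k. -/

import Mathlib

/-! Machinery: effective relations and relation type of an ideal with respect to a module,
via the canonical presentation of the Rees module `⊕ₙ IⁿM` as a quotient of the polynomial
module on the elements of `I` with coefficients in `M` (encoded as `(I →₀ ℕ) →₀ M`,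
a finitely supported family of elements of `M` indexed by monomials in the elements of `I`). -/

section RelType

variable {A : Type*} [CommRing A]

/-- Evaluation of a polynomial with coefficients in `M` and variables indexed by `ι`,
sending the variable `i` to `v i`. -/
noncomputable def reesEval (M : Type*) [AddCommGroup M] [Module A M]
    {ι : Type*} (v : ι → A) : ((ι →₀ ℕ) →₀ M) →ₗ[A] M :=
  Finsupp.lsum ℕ fun d => (d.prod fun i e => v i ^ e) • (LinearMap.id : M →ₗ[A] M)

/-- The submodule of homogeneous elements of degree `n` of the polynomial module. -/
def degSub (M : Type*) [AddCommGroup M] [Module A M] (ι : Type*) (n : ℕ) :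
    Submodule A ((ι →₀ ℕ) →₀ M) where
  carrier := {f | ∀ d ∈ f.support, (d.sum fun _ e => e) = n}
  add_mem' := by
    classical
    intro f g hf hg d hd
    rcases Finset.mem_union.mp (Finsupp.support_add hd) with h | h
    exacts [hf d h, hg d h]
  zero_mem' := by intro d hd; simp at hd
  smul_mem' := by intro c f hf d hd; exact hf d (Finsupp.support_smul hd)

/-- Multiplication by the degree-one variable `i`. -/
noncomputable def shiftMap (M : Type*) [AddCommGroup M] [Module A M] {ι : Type*} (i : ι) :
    ((ι →₀ ℕ) →₀ M) →ₗ[A] ((ι →₀ ℕ) →₀ M) :=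
  Finsupp.lmapDomain M A (fun d => d + Finsupp.single i 1)

/-- The degree-`n` part of the kernel of the canonical presentation. -/
noncomputable def effKer (M : Type*) [AddCommGroup M] [Module A M]
    {ι : Type*} (v : ι → A) (n : ℕ) : Submodule A ((ι →₀ ℕ) →₀ M) :=
  LinearMap.ker (reesEval M v) ⊓ degSub M ι n

/-- The module of effective `n`-relations `E(I;M)_n = ker γₙ / U₁ ker γₙ₋₁` vanishes. -/
noncomputable def effVanish (M : Type*) [AddCommGroup M] [Module A M]
    {ι : Type*} (v : ι → A) (n : ℕ) : Prop :=
  effKer M v n ≤ ⨆ i : ι, (effKer M v (n - 1)).map (shiftMap M i)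

/-- The relation type `rt(I;M)`: least `r ≥ 1` such that `E(I;M)ₙ = 0` for all `n ≥ r+1`,
computed from the canonical presentation indexed by all elements of `I`. -/
noncomputable def relType (M : Type*) [AddCommGroup M] [Module A M] (I : Ideal A) : ℕ :=
  sInf {r | 1 ≤ r ∧ ∀ n, r + 1 ≤ n → effVanish M (fun i : I => (i : A)) n}

/-- The reduction number `rn_J(I;M)`: least `n` with `I^{n+1}M = J(IⁿM)`. -/
noncomputable def redNum (J I : Ideal A) (M : Type*) [AddCommGroup M] [Module A M] : ℕ :=
  sInf {n | I ^ (n + 1) • (⊤ : Submodule A M) = J • (I ^ n • (⊤ : Submodule A M))}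

end RelType

/-! Modulo `U₁ · ker γₙ₊₁`, every relation of degree `n + 2` can be rewritten as
`∑ⱼ X_{xⱼ} Qⱼ`, since each variable `X_a` differs from `∑ⱼ cⱼ X_{xⱼ}` by a linear relation.
Evaluating gives `∑ⱼ xⱼ qⱼ = 0` with `qⱼ ∈ Jⁿ⁺¹N`; the colon condition for the last generator
`xᵢ` puts `qᵢ` in `(x₁, …, xᵢ₋₁) JⁿN`, so `Qᵢ` can be traded, modulo `X_{xᵢ} · ker γₙ₊₁`, for
terms in the earlier variables, and induction on `i` places the relation in `U₁ · ker γₙ₊₁`.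
For `N = IʳM` the reduction identifies `I^{r+t}M` with `Jᵗ(IʳM)`, which turns the hypothesis
on `M` into this condition on `N`. -/

section ReesPresentation

variable {A : Type*} [CommRing A] {N : Type*} [AddCommGroup N] [Module A N] {ι : Type*}

theorem mem_degSub_iff {n : ℕ} {f : (ι →₀ ℕ) →₀ N} :
    f ∈ degSub (A := A) N ι n ↔ ∀ d ∈ f.support, d.degree = n := Iff.rfl

theorem single_mem_degSub (d : ι →₀ ℕ) (m : N) :
    Finsupp.single d m ∈ degSub (A := A) N ι d.degree := by
  classical
  intro d' hd'
  rw [Finset.mem_singleton.mp (Finsupp.support_single_subset hd')]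
  rfl

theorem shiftMap_single (i : ι) (d : ι →₀ ℕ) (m : N) :
    shiftMap (A := A) N i (Finsupp.single d m) = Finsupp.single (d + Finsupp.single i 1) m :=
  Finsupp.mapDomain_single

theorem shiftMap_mem_degSub {n : ℕ} {f : (ι →₀ ℕ) →₀ N} (hf : f ∈ degSub (A := A) N ι n)
    (i : ι) : shiftMap (A := A) N i f ∈ degSub (A := A) N ι (n + 1) := by
  classical
  intro d hd
  obtain ⟨d₀, hd₀, rfl⟩ := Finset.mem_image.mp (Finsupp.mapDomain_support hd)
  change Finsupp.degree _ = _
  rw [map_add, Finsupp.degree_single, mem_degSub_iff.mp hf d₀ hd₀]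

theorem shiftMap_comm (i j : ι) (f : (ι →₀ ℕ) →₀ N) :
    shiftMap (A := A) N i (shiftMap (A := A) N j f) =
      shiftMap (A := A) N j (shiftMap (A := A) N i f) := by
  simp only [shiftMap, Finsupp.lmapDomain_apply, ← Finsupp.mapDomain_comp]
  congr 1
  funext d
  exact add_right_comm _ _ _

theorem reesEval_single (v : ι → A) (d : ι →₀ ℕ) (m : N) :
    reesEval N v (Finsupp.single d m) = (d.prod fun i e => v i ^ e) • m := by
  simp [reesEval]

theorem reesEval_shiftMap (v : ι → A) (i : ι) (f : (ι →₀ ℕ) →₀ N) :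
    reesEval N v (shiftMap (A := A) N i f) = v i • reesEval N v f := by
  induction f using Finsupp.induction_linear with
  | zero => simp
  | add f g hf hg => simp [hf, hg, smul_add]
  | single d m =>
      rw [shiftMap_single, reesEval_single, reesEval_single,
        Finsupp.prod_add_index' (by simp) (fun _ _ _ => pow_add _ _ _),
        Finsupp.prod_single_index (by simp), pow_one, mul_comm, mul_smul]

theorem degSub_succ_le_iSup_map_shiftMap (n : ℕ) :
    degSub (A := A) N ι (n + 1) ≤ ⨆ i, (degSub N ι n).map (shiftMap N i) := by
  intro f hf
  rw [← f.sum_single]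
  refine Submodule.finsuppSum_mem _ _ _ _ fun d hd => ?_
  have hdeg : d.degree = n + 1 := hf d (Finsupp.mem_support_iff.mpr hd)
  obtain ⟨i, hi⟩ : ∃ i, d i ≠ 0 := by
    by_contra! h
    simp [show d = 0 from Finsupp.ext h] at hdeg
  have hle : Finsupp.single i 1 ≤ d := Finsupp.single_le_iff.mpr (Nat.one_le_iff_ne_zero.mpr hi)
  have hd' : d = (d - Finsupp.single i 1) + Finsupp.single i 1 := (tsub_add_cancel_of_le hle).symm
  refine Submodule.mem_iSup_of_mem i ⟨Finsupp.single (d - Finsupp.single i 1) (f d), ?_, ?_⟩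
  · have := single_mem_degSub (A := A) (d - Finsupp.single i 1) (f d)
    have hdeg' : (d - Finsupp.single i 1).degree = n := by
      rw [hd', map_add, Finsupp.degree_single] at hdeg; omega
    rwa [hdeg'] at this
  · simp only [shiftMap_single, ← hd']

/-- `U₁ · ker γₙ` in the notation of `effVanish`. -/
noncomputable def shiftedKer (N : Type*) [AddCommGroup N] [Module A N] (v : ι → A) (n : ℕ) :
    Submodule A ((ι →₀ ℕ) →₀ N) :=
  ⨆ i, (effKer N v n).map (shiftMap N i)

theorem shiftedKer_le_ker (v : ι → A) (n : ℕ) :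
    shiftedKer N v n ≤ LinearMap.ker (reesEval N v) := by
  refine iSup_le fun i => Submodule.map_le_iff_le_comap.mpr fun f hf => ?_
  simp [reesEval_shiftMap, LinearMap.mem_ker.mp hf.1]

theorem degSub_le_comap_reesEval {J : Ideal A} {v : ι → A} (hv : ∀ i, v i ∈ J) (n : ℕ) :
    degSub (A := A) N ι n ≤ (J ^ n • (⊤ : Submodule A N)).comap (reesEval N v) := by
  induction n with
  | zero => simp
  | succ n ih =>
    refine (degSub_succ_le_iSup_map_shiftMap n).trans <|
      iSup_le fun i => Submodule.map_le_iff_le_comap.mpr fun f hf => ?_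
    show reesEval N v (shiftMap N i f) ∈ J ^ (n + 1) • (⊤ : Submodule A N)
    rw [reesEval_shiftMap, pow_succ', Submodule.mul_smul]
    exact Submodule.smul_mem_smul (hv i) (ih hf)

end ReesPresentation

section Generators

variable {A : Type*} [CommRing A] {N : Type*} [AddCommGroup N] [Module A N] {J : Ideal A}

theorem pow_smul_top_le_map_reesEval (n : ℕ) :
    J ^ n • (⊤ : Submodule A N) ≤ (degSub (A := A) N J n).map (reesEval N (↑)) := by
  induction n with
  | zero =>
    intro w _
    refine ⟨Finsupp.single 0 w, single_mem_degSub 0 w, ?_⟩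
    simp [reesEval_single]
  | succ n ih =>
    rw [pow_succ', Submodule.mul_smul]
    refine (Submodule.smul_mono le_rfl ih).trans (Submodule.smul_le.mpr ?_)
    rintro a ha _ ⟨f, hf, rfl⟩
    exact ⟨shiftMap N ⟨a, ha⟩ f, shiftMap_mem_degSub hf _, reesEval_shiftMap _ _ _⟩

variable {κ : Type*} {x : κ → A} (hx : ∀ j, x j ∈ J)
include hx

/-- Its elements have degree `n + 1`. -/
noncomputable def varMultiples (N : Type*) [AddCommGroup N] [Module A N] (T : Set κ) (n : ℕ) :
    Submodule A ((J →₀ ℕ) →₀ N) :=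
  ⨆ j ∈ T, (degSub N J n).map (shiftMap N ⟨x j, hx j⟩)

theorem shiftMap_mem_varMultiples {T : Set κ} {j : κ} (hj : j ∈ T) {n : ℕ}
    {f : (J →₀ ℕ) →₀ N} (hf : f ∈ degSub (A := A) N J n) :
    shiftMap (A := A) N ⟨x j, hx j⟩ f ∈ varMultiples hx N T n :=
  Submodule.mem_iSup_of_mem j <| Submodule.mem_iSup_of_mem hj <| Submodule.mem_map_of_mem hf

theorem varMultiples_insert (j : κ) (T : Set κ) (n : ℕ) :
    varMultiples hx N (insert j T) n =
      (degSub N J n).map (shiftMap (A := A) N ⟨x j, hx j⟩) ⊔ varMultiples hx N T n :=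
  iSup_insert

theorem varMultiples_le_degSub (T : Set κ) (n : ℕ) :
    varMultiples hx N T n ≤ degSub (A := A) N J (n + 1) :=
  iSup₂_le fun _ _ => Submodule.map_le_iff_le_comap.mpr fun _ hf => shiftMap_mem_degSub hf _

theorem map_shiftMap_varMultiples_le (a : J) (T : Set κ) (n : ℕ) :
    (varMultiples hx N T n).map (shiftMap (A := A) N a) ≤ varMultiples hx N T (n + 1) := by
  refine Submodule.map_le_iff_le_comap.mpr <|
    iSup₂_le fun j hj => Submodule.map_le_iff_le_comap.mpr fun f hf => ?_
  rw [Submodule.mem_comap, Submodule.mem_comap, shiftMap_comm]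
  exact shiftMap_mem_varMultiples hx hj (shiftMap_mem_degSub hf a)

theorem map_reesEval_varMultiples_le (T : Set κ) (n : ℕ) :
    (varMultiples hx N T n).map (reesEval N ((↑) : J → A)) ≤
      Ideal.span (x '' T) • (J ^ n • (⊤ : Submodule A N)) := by
  refine Submodule.map_le_iff_le_comap.mpr <|
    iSup₂_le fun j hj => Submodule.map_le_iff_le_comap.mpr fun f hf => ?_
  rw [Submodule.mem_comap, Submodule.mem_comap, reesEval_shiftMap]
  exact Submodule.smul_mem_smul (Ideal.subset_span ⟨j, hj, rfl⟩)
    (degSub_le_comap_reesEval (fun a => a.2) n hf)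

theorem span_smul_le_map_reesEval_varMultiples (T : Set κ) (n : ℕ) :
    Ideal.span (x '' T) • (J ^ n • (⊤ : Submodule A N)) ≤
      (varMultiples hx N T n).map (reesEval N ((↑) : J → A)) := by
  rw [Submodule.span_smul_eq]
  refine Submodule.set_smul_le _ _ _ ?_
  rintro _ w ⟨j, hj, rfl⟩ hw
  obtain ⟨f, hf, rfl⟩ := pow_smul_top_le_map_reesEval n hw
  exact ⟨_, shiftMap_mem_varMultiples hx hj hf, reesEval_shiftMap _ _ _⟩

theorem degSub_add_two_le [Fintype κ] (hJ : J ≤ Ideal.span (Set.range x)) (n : ℕ) :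
    degSub (A := A) N J (n + 2) ≤
      shiftedKer N (↑) (n + 1) ⊔ varMultiples hx N Set.univ (n + 1) := by
  refine (degSub_succ_le_iSup_map_shiftMap (n + 1)).trans <| iSup_le fun b =>
    Submodule.map_le_iff_le_comap.mpr <| (degSub_succ_le_iSup_map_shiftMap n).trans <|
    iSup_le fun a => Submodule.map_le_iff_le_comap.mpr fun f hf => ?_
  obtain ⟨c, hc⟩ := (Submodule.mem_span_range_iff_exists_fun A).mp (hJ a.2)
  -- `X_a - ∑ c_j X_{x j}` evaluates to `0`, so it multiplies `f` into the kernel.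
  set L := shiftMap (A := A) N a f - ∑ j, shiftMap (A := A) N ⟨x j, hx j⟩ (c j • f)
  have hL : L ∈ effKer N ((↑) : J → A) (n + 1) := by
    refine Submodule.mem_inf.mpr ⟨?_, sub_mem (shiftMap_mem_degSub hf a) <|
      sum_mem fun j _ => shiftMap_mem_degSub (Submodule.smul_mem _ _ hf) _⟩
    rw [LinearMap.mem_ker, map_sub, map_sum]
    simp only [map_smul, reesEval_shiftMap, smul_smul, ← Finset.sum_smul, ← sub_smul]
    simp only [← hc, smul_eq_mul, sub_self, zero_smul]
  have hsplit : shiftMap (A := A) N b (shiftMap (A := A) N a f) = shiftMap (A := A) N b L +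
      ∑ j, shiftMap (A := A) N ⟨x j, hx j⟩ (shiftMap (A := A) N b (c j • f)) := by
    simp [L, map_sub, map_sum, shiftMap_comm]
  rw [Submodule.mem_comap, Submodule.mem_comap, hsplit]
  exact Submodule.add_mem_sup (Submodule.mem_iSup_of_mem b (Submodule.mem_map_of_mem hL))
    (sum_mem fun j _ => shiftMap_mem_varMultiples hx (Set.mem_univ j)
      (shiftMap_mem_degSub (Submodule.smul_mem _ _ hf) b))

end Generators

section ColonCondition

variable {A : Type*} [CommRing A] {N : Type*} [AddCommGroup N] [Module A N] {J : Ideal A}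
  {s : ℕ} {x : Fin s → A}

theorem ker_inf_varMultiples_le_shiftedKer (hx : ∀ j, x j ∈ J) {n : ℕ}
    (hcolon : ∀ i : Fin s,
      Submodule.comap (LinearMap.lsmul A N (x i))
          (Ideal.span (x '' {j | j < i}) • (J ^ (n + 1) • (⊤ : Submodule A N))) ⊓
        (J ^ (n + 1) • ⊤) ≤
      Ideal.span (x '' {j | j < i}) • (J ^ n • ⊤))
    (i : ℕ) (hi : i ≤ s) :
    LinearMap.ker (reesEval N ((↑) : J → A)) ⊓ varMultiples hx N {j | (j : ℕ) < i} (n + 1) ≤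
      shiftedKer N ((↑) : J → A) (n + 1) := by
  induction i with
  | zero =>
    rintro G ⟨-, hG⟩
    simp only [varMultiples, not_lt_zero, Set.ofPred_false, Set.mem_empty_iff_false,
      not_false_eq_true, iSup_neg, iSup_bot, Submodule.bot_coe, Set.mem_singleton_iff] at hG
    simp only [hG, zero_mem]
  | succ i ih =>
    let i' : Fin s := ⟨i, hi⟩
    have hT : {j : Fin s | (j : ℕ) < i + 1} = insert i' {j : Fin s | (j : ℕ) < i} := by
      ext j
      simp only [Order.lt_add_one_iff, Set.mem_ofPred_eq, Set.mem_insert_iff, Fin.ext_iff, i']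
      omega
    intro _ hG
    obtain ⟨hker, hG⟩ := Submodule.mem_inf.mp hG
    rw [hT, varMultiples_insert, Submodule.mem_sup] at hG
    obtain ⟨_, ⟨Q, hQ, rfl⟩, G', hG', rfl⟩ := hG
    have hxQ : x i' • reesEval N ((↑) : J → A) Q ∈
        Ideal.span (x '' {j | j < i'}) • (J ^ (n + 1) • (⊤ : Submodule A N)) := by
      have h : x i' • reesEval N ((↑) : J → A) Q + reesEval N ((↑) : J → A) G' = 0 := by
        rwa [LinearMap.mem_ker, map_add, reesEval_shiftMap] at hker
      rw [eq_neg_of_add_eq_zero_left h]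
      exact neg_mem (map_reesEval_varMultiples_le hx _ _ ⟨G', hG', rfl⟩)
    have hQJ : reesEval N ((↑) : J → A) Q ∈ J ^ (n + 1) • (⊤ : Submodule A N) :=
      degSub_le_comap_reesEval (fun a => a.2) _ hQ
    obtain ⟨G'', hG'', hG''Q⟩ :=
      span_smul_le_map_reesEval_varMultiples hx _ n (hcolon i' ⟨hxQ, hQJ⟩)
    have hQG : Q - G'' ∈ effKer N ((↑) : J → A) (n + 1) :=
      Submodule.mem_inf.mpr ⟨by simp [hG''Q], sub_mem hQ (varMultiples_le_degSub hx _ _ hG'')⟩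
    have hK : shiftMap (A := A) N ⟨x i', hx i'⟩ (Q - G'') ∈
        shiftedKer N ((↑) : J → A) (n + 1) :=
      Submodule.mem_iSup_of_mem _ (Submodule.mem_map_of_mem hQG)
    have hsplit : shiftMap (A := A) N ⟨x i', hx i'⟩ Q + G' = shiftMap (A := A) N ⟨x i', hx i'⟩
        (Q - G'') + (G' + shiftMap (A := A) N ⟨x i', hx i'⟩ G'') := by
      rw [map_sub]
      abel
    rw [hsplit] at hker ⊢
    refine add_mem hK (ih (Nat.le_of_succ_le hi) ⟨?_,
      add_mem hG' (map_shiftMap_varMultiples_le hx _ _ _ ⟨G'', hG'', rfl⟩)⟩)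
    rwa [LinearMap.mem_ker, map_add,
      LinearMap.mem_ker.mp (shiftedKer_le_ker _ _ hK), zero_add] at hker

theorem relType_le_of_colon {k : ℕ} (hJ : J = Ideal.span (Set.range x)) (hk : 1 ≤ k)
    (hcolon : ∀ t, k ≤ t → ∀ i : Fin s,
      Submodule.comap (LinearMap.lsmul A N (x i))
          (Ideal.span (x '' {j | j < i}) • (J ^ t • (⊤ : Submodule A N))) ⊓ (J ^ t • ⊤) ≤
        Ideal.span (x '' {j | j < i}) • (J ^ (t - 1) • ⊤)) :
    relType N J ≤ k := by
  have hx : ∀ j, x j ∈ J := fun j => hJ ▸ Ideal.subset_span ⟨j, rfl⟩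
  refine Nat.sInf_le ⟨hk, fun n hn F hF => ?_⟩
  obtain ⟨n, rfl⟩ : ∃ m, n = m + 2 := ⟨n - 2, by omega⟩
  obtain ⟨hFker, hFdeg⟩ := Submodule.mem_inf.mp hF
  obtain ⟨K, hK, G, hG, rfl⟩ := Submodule.mem_sup.mp (degSub_add_two_le hx hJ.le n hFdeg)
  have hGker : G ∈ LinearMap.ker (reesEval N ((↑) : J → A)) := by
    rwa [LinearMap.mem_ker, map_add, LinearMap.mem_ker.mp (shiftedKer_le_ker _ _ hK),
      zero_add] at hFker
  have huniv : {j : Fin s | (j : ℕ) < s} = Set.univ := Set.eq_univ_of_forall Fin.is_lt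
  exact add_mem hK <| ker_inf_varMultiples_le_shiftedKer hx (hcolon (n + 1) (by omega)) s le_rfl
    (Submodule.mem_inf.mpr ⟨hGker, huniv ▸ hG⟩)

end ColonCondition

section Transport

variable {A : Type*} [CommRing A] {M : Type*} [AddCommGroup M] [Module A M]

theorem pow_smul_eq_pow_smul_of_smul_eq {I J : Ideal A} {P : Submodule A M} (h : I • P = J • P)
    (t : ℕ) : I ^ t • P = J ^ t • P := by
  induction t with
  | zero => rfl
  | succ t ih =>
    rw [pow_succ, Submodule.mul_smul, h, ← Submodule.mul_smul, mul_comm, Submodule.mul_smul, ih,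
      ← Submodule.mul_smul, ← pow_succ']

theorem mem_smul_smul_top_iff (P : Submodule A M) (S a : Ideal A) (q : P) :
    q ∈ S • (a • (⊤ : Submodule A P)) ↔ (q : M) ∈ S • (a • P) := by
  have hP : (S • (a • P)).comap P.subtype = S • (a • ⊤) := by
    rw [Submodule.comap_smul'' P.injective_subtype
        (Submodule.smul_le_right.trans P.range_subtype.ge),
      Submodule.comap_smul'' P.injective_subtype P.range_subtype.ge, Submodule.comap_subtype_self]
  rw [← hP, Submodule.mem_comap, Submodule.subtype_apply]

theorem comap_lsmul_inf_smul_top_le {P : Submodule A M} {S a b : Ideal A} {c : A}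
    (h : (S • (a • P)).comap (LinearMap.lsmul A M c) ⊓ (a • P) ≤ S • (b • P)) :
    (S • (a • (⊤ : Submodule A P))).comap (LinearMap.lsmul A P c) ⊓ (a • ⊤) ≤
      S • (b • ⊤) := by
  intro q hq
  obtain ⟨hcq, hq⟩ := Submodule.mem_inf.mp hq
  rw [Submodule.mem_comap, LinearMap.lsmul_apply, mem_smul_smul_top_iff] at hcq
  rw [mem_smul_smul_top_iff]
  exact h (Submodule.mem_inf.mpr ⟨hcq, (Submodule.mem_smul_top_iff _ _ _).mp hq⟩)

end Transport

theorem stmt17_general {A : Type*} [CommRing A] (M : Type*) [AddCommGroup M] [Module A M]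
    (I : Ideal A) {s : ℕ} (x : Fin s → A) (J : Ideal A) (hJ : J = Ideal.span (Set.range x))
    (r : ℕ)
    (hred : I ^ (r + 1) • (⊤ : Submodule A M) = J • (I ^ r • (⊤ : Submodule A M)))
    (k : ℕ) (hk : 1 ≤ k)
    (hcond : ∀ n, r + k ≤ n → ∀ i : Fin s,
      Submodule.comap (LinearMap.lsmul A M (x i))
          (Ideal.span (x '' {j : Fin s | j < i}) • (I ^ n • (⊤ : Submodule A M))) ⊓
        (I ^ n • (⊤ : Submodule A M)) =
      Ideal.span (x '' {j : Fin s | j < i}) • (I ^ (n - 1) • (⊤ : Submodule A M))) :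
    relType (↥(I ^ r • (⊤ : Submodule A M))) J ≤ k := by
  have hIJ : I • (I ^ r • ⊤) = J • (I ^ r • (⊤ : Submodule A M)) := by
    rw [← hred, ← Submodule.mul_smul, ← pow_succ']
  have hpow (t : ℕ) : I ^ (r + t) • (⊤ : Submodule A M) = J ^ t • (I ^ r • ⊤) := by
    rw [← pow_smul_eq_pow_smul_of_smul_eq hIJ, ← Submodule.mul_smul, ← pow_add, add_comm]
  refine relType_le_of_colon hJ hk fun t ht i => comap_lsmul_inf_smul_top_le ?_
  rw [← hpow, ← hpow, hcond (r + t) (by omega) i, show r + t - 1 = r + (t - 1) by omega]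

/-- If `J = (x₁,...,x_s) ⊆ I` is a reduction of `I` with respect to `M` with
reduction number `r`, and for some `k ≥ 1`, for all `n ≥ r+k` and all `i`,
`[(x₁,...,x_{i-1})IⁿM : x_i] ∩ IⁿM = (x₁,...,x_{i-1})I^{n-1}M`, then `rt(J; I^r M) ≤ k`. -/
theorem stmt17 {A : Type*} [CommRing A] (M : Type*) [AddCommGroup M] [Module A M]
    (I : Ideal A) {s : ℕ} (x : Fin s → A) (J : Ideal A) (hJ : J = Ideal.span (Set.range x))
    (hJI : J ≤ I) (r : ℕ) (hr : r = redNum J I M)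
    (hred : I ^ (r + 1) • (⊤ : Submodule A M) = J • (I ^ r • (⊤ : Submodule A M)))
    (k : ℕ) (hk : 1 ≤ k)
    (hcond : ∀ n, r + k ≤ n → ∀ i : Fin s,
      Submodule.comap (LinearMap.lsmul A M (x i))
          (Ideal.span (x '' {j : Fin s | j < i}) • (I ^ n • (⊤ : Submodule A M))) ⊓
        (I ^ n • (⊤ : Submodule A M)) =
      Ideal.span (x '' {j : Fin s | j < i}) • (I ^ (n - 1) • (⊤ : Submodule A M))) :
    relType (↥(I ^ r • (⊤ : Submodule A M))) J ≤ k :=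
  stmt17_general M I x J hJ r hred k hk hcond
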